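/- arXiv:math/0009121 — 8 statements merged into one kernel-verified Lean document; each statement's English description precedes it below -/
import Mathlib

section
/- For any positive integers n and m and complex numbers x, y with |x|<1 and |y|<1, the polylogarithm functions satisfy the shuffle product formula: Li_n(x)·Li_m(y) = Li_{n,m}(x,y) + Li_{n+m}(xy) + Li_{m,n}(y,x), where Li_n(x) = ∑_{k≥1} x^k/k^n and Li_{n,m}(x,y) = ∑_{0<k_1<k_2} x^{k_1} y^{k_2}/(k_1^n k_2^m). -/
/- STATEMENT 0: shuffle product formula for (double) polylogarithms:
   Li_n(x)·Li_m(y) = Li_{n,m}(x,y) + Li_{n+m}(xy) + Li_{m,n}(y,x) for |x|,|y| < 1. -/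

open scoped BigOperators

/-- `Li n x = ∑_{k ≥ 1} x^k / k^n`. -/
noncomputable def Li (n : ℕ) (x : ℂ) : ℂ :=
  ∑' k : ℕ, x ^ (k + 1) / ((k + 1 : ℕ) : ℂ) ^ n

/-- `Li2 n m x y = ∑_{0 < k₁ < k₂} x^{k₁} y^{k₂} / (k₁^n k₂^m)`. -/
noncomputable def Li2 (n m : ℕ) (x y : ℂ) : ℂ :=
  ∑' p : {p : ℕ × ℕ // 0 < p.1 ∧ p.1 < p.2},
    x ^ (p : ℕ × ℕ).1 * y ^ (p : ℕ × ℕ).2 /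
      (((p : ℕ × ℕ).1 : ℂ) ^ n * ((p : ℕ × ℕ).2 : ℂ) ^ m)

lemma Li_summable_norm (n : ℕ) (z : ℂ) (hz : ‖z‖ < 1) :
    Summable (fun k : ℕ => ‖z ^ (k + 1) / ((k + 1 : ℕ) : ℂ) ^ n‖) := by
  apply Summable.of_nonneg_of_le (fun k => norm_nonneg _) (fun k => ?_)
    ((summable_geometric_of_lt_one (norm_nonneg z) hz).mul_left ‖z‖)
  rw [norm_div, norm_pow, norm_pow]
  have h1 : (1 : ℝ) ≤ ‖((k + 1 : ℕ) : ℂ)‖ := by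
    rw [Complex.norm_natCast]
    exact_mod_cast Nat.one_le_iff_ne_zero.mpr (Nat.succ_ne_zero k)
  calc ‖z‖ ^ (k + 1) / ‖((k + 1 : ℕ) : ℂ)‖ ^ n ≤ ‖z‖ ^ (k + 1) :=
        div_le_self (pow_nonneg (norm_nonneg z) _) (one_le_pow₀ h1)
    _ = ‖z‖ * ‖z‖ ^ k := by
        rw [pow_succ]; ring

/-- shift equivalence for the region `k₁ < k₂`. -/
def eLT : {p : ℕ × ℕ // p.1 < p.2} ≃ {p : ℕ × ℕ // 0 < p.1 ∧ p.1 < p.2} where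
  toFun q := ⟨(q.1.1 + 1, q.1.2 + 1), Nat.succ_pos _, Nat.succ_lt_succ q.2⟩
  invFun q := ⟨(q.1.1 - 1, q.1.2 - 1), by have := q.2; omega⟩
  left_inv q := by cases q with | mk p h => cases p; simp
  right_inv q := by
    cases q with | mk p h =>
      cases p
      simp only [Subtype.mk.injEq, Prod.mk.injEq]
      omega

/-- shift equivalence for the region `k₂ < k₁` (swapped). -/
def eGT : {p : ℕ × ℕ // p.2 < p.1} ≃ {p : ℕ × ℕ // 0 < p.1 ∧ p.1 < p.2} where
  toFun q := ⟨(q.1.2 + 1, q.1.1 + 1), Nat.succ_pos _, Nat.succ_lt_succ q.2⟩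
  invFun q := ⟨(q.1.2 - 1, q.1.1 - 1), by have := q.2; omega⟩
  left_inv q := by cases q with | mk p h => cases p; simp
  right_inv q := by
    cases q with | mk p h =>
      cases p
      simp only [Subtype.mk.injEq, Prod.mk.injEq]
      omega

/-- the diagonal. -/
def eEQ : ℕ ≃ {p : ℕ × ℕ // p.1 = p.2} where
  toFun k := ⟨(k, k), rfl⟩
  invFun q := q.1.1
  left_inv k := rfl
  right_inv q := by
    obtain ⟨⟨a, b⟩, h⟩ := q
    simp only at h
    subst h
    rfl

theorem polylog_shuffle (n m : ℕ) (hn : 0 < n) (hm : 0 < m) (x y : ℂ)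
    (hx : ‖x‖ < 1) (hy : ‖y‖ < 1) :
    Li n x * Li m y = Li2 n m x y + Li (n + m) (x * y) + Li2 m n y x := by
  set f : ℕ → ℂ := fun k => x ^ (k + 1) / ((k + 1 : ℕ) : ℂ) ^ n with hfdef
  set g : ℕ → ℂ := fun k => y ^ (k + 1) / ((k + 1 : ℕ) : ℂ) ^ m with hgdef
  have hfs : Summable (fun k => ‖f k‖) := Li_summable_norm n x hx
  have hgs : Summable (fun k => ‖g k‖) := Li_summable_norm m y hy
  set F : ℕ × ℕ → ℂ := fun p => f p.1 * g p.2 with hFdef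
  have hFnorm : Summable (fun p : ℕ × ℕ => ‖f p.1 * g p.2‖) := hfs.mul_norm hgs
  have hF : Summable F := hFnorm.of_norm
  have hprod : Li n x * Li m y = ∑' p : ℕ × ℕ, F p :=
    tsum_mul_tsum_of_summable_norm hfs hgs
  set s₁ : Set (ℕ × ℕ) := {p | p.1 < p.2} with hs₁
  set s₂ : Set (ℕ × ℕ) := {p | p.1 = p.2} with hs₂
  set s₃ : Set (ℕ × ℕ) := {p | p.2 < p.1} with hs₃
  have hsplit : ∀ p : ℕ × ℕ,
      F p = s₁.indicator F p + s₂.indicator F p + s₃.indicator F p := by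
    intro p
    obtain ⟨a, b⟩ := p
    simp only [Set.indicator_apply, hs₁, hs₂, hs₃, Set.mem_setOf_eq]
    split_ifs <;> first | ring1 | (exfalso; omega)
  have htsum : ∑' p : ℕ × ℕ, F p =
      (∑' p : ℕ × ℕ, s₁.indicator F p) + (∑' p : ℕ × ℕ, s₂.indicator F p)
        + (∑' p : ℕ × ℕ, s₃.indicator F p) := by
    rw [← Summable.tsum_add (hF.indicator s₁) (hF.indicator s₂),
      ← Summable.tsum_add ((hF.indicator s₁).add (hF.indicator s₂)) (hF.indicator s₃)]
    exact tsum_congr hsplit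
  have h₁ : ∑' p : ℕ × ℕ, s₁.indicator F p = Li2 n m x y := by
    calc ∑' p : ℕ × ℕ, s₁.indicator F p
        = ∑' q : {p : ℕ × ℕ // p.1 < p.2}, F q.1 := (tsum_subtype s₁ F).symm
      _ = ∑' q : {p : ℕ × ℕ // 0 < p.1 ∧ p.1 < p.2}, F ((eLT.symm q).1) := by
          rw [← Equiv.tsum_eq eLT (fun q => F ((eLT.symm q).1))]
          exact tsum_congr fun q => by rw [Equiv.symm_apply_apply]
      _ = Li2 n m x y := by
          apply tsum_congr
          rintro ⟨⟨a, b⟩, h1, h2⟩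
          simp only [eLT, Equiv.symm, Equiv.coe_fn_mk, hFdef, hfdef, hgdef]
          have ha : a - 1 + 1 = a := by omega
          have hb : b - 1 + 1 = b := by omega
          rw [div_mul_div_comm, ha, hb]
  have h₂ : ∑' p : ℕ × ℕ, s₂.indicator F p = Li (n + m) (x * y) := by
    calc ∑' p : ℕ × ℕ, s₂.indicator F p
        = ∑' q : {p : ℕ × ℕ // p.1 = p.2}, F q.1 := (tsum_subtype s₂ F).symm
      _ = ∑' k : ℕ, F ((eEQ k).1) := (Equiv.tsum_eq eEQ (fun q => F q.1)).symm
      _ = Li (n + m) (x * y) := by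
          apply tsum_congr
          intro k
          simp only [eEQ, Equiv.coe_fn_mk, hFdef, hfdef, hgdef]
          rw [div_mul_div_comm, ← mul_pow, ← pow_add]
  have h₃ : ∑' p : ℕ × ℕ, s₃.indicator F p = Li2 m n y x := by
    calc ∑' p : ℕ × ℕ, s₃.indicator F p
        = ∑' q : {p : ℕ × ℕ // p.2 < p.1}, F q.1 := (tsum_subtype s₃ F).symm
      _ = ∑' q : {p : ℕ × ℕ // 0 < p.1 ∧ p.1 < p.2}, F ((eGT.symm q).1) := by
          rw [← Equiv.tsum_eq eGT (fun q => F ((eGT.symm q).1))]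
          exact tsum_congr fun q => by rw [Equiv.symm_apply_apply]
      _ = Li2 m n y x := by
          apply tsum_congr
          rintro ⟨⟨a, b⟩, h1, h2⟩
          simp only [eGT, Equiv.symm, Equiv.coe_fn_mk, hFdef, hfdef, hgdef]
          have ha : a - 1 + 1 = a := by omega
          have hb : b - 1 + 1 = b := by omega
          rw [div_mul_div_comm, ha, hb, mul_comm (x ^ b) (y ^ a),
            mul_comm ((b : ℂ) ^ n) ((a : ℂ) ^ m)]
  rw [hprod, htsum, h₁, h₂, h₃]
end

section
/- Let A be the free associative algebra over ℚ on a finite set S, and suppose B_s ∈ A for s ∈ S satisfy ∑_{s∈S} [B_s, s] = 0. Then the map D_B defined on generators by D_B(s) = [B_s, s] extends to a derivation of A, and if C = (C_s) is another such system, then [D_B, D_C] = D_E where E_s := D_B(C_s) − D_C(B_s) − [B_s, C_s]; in particular ∑_{s∈S} [E_s, s] = 0. -/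
/- STATEMENT 2: systems (B_s) with ∑ [B_s, s] = 0 in the free associative algebra define
   special derivations D_B with D_B(s) = [B_s, s], and [D_B, D_C] = D_E with
   E_s = D_B(C_s) − D_C(B_s) − [B_s, C_s]; in particular ∑ [E_s, s] = 0. -/

open scoped BigOperators

theorem special_derivations_bracket (S : Type) [Fintype S]
    (B C : S → FreeAlgebra ℚ S)
    (hB : ∑ s, ⁅B s, FreeAlgebra.ι ℚ s⁆ = 0)
    (hC : ∑ s, ⁅C s, FreeAlgebra.ι ℚ s⁆ = 0) :
    (∃ D : FreeAlgebra ℚ S →ₗ[ℚ] FreeAlgebra ℚ S,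
        (∀ x y, D (x * y) = D x * y + x * D y) ∧
          ∀ s, D (FreeAlgebra.ι ℚ s) = ⁅B s, FreeAlgebra.ι ℚ s⁆) ∧
      ∀ DB DC : FreeAlgebra ℚ S →ₗ[ℚ] FreeAlgebra ℚ S,
        (∀ x y, DB (x * y) = DB x * y + x * DB y) →
        (∀ x y, DC (x * y) = DC x * y + x * DC y) →
        (∀ s, DB (FreeAlgebra.ι ℚ s) = ⁅B s, FreeAlgebra.ι ℚ s⁆) →
        (∀ s, DC (FreeAlgebra.ι ℚ s) = ⁅C s, FreeAlgebra.ι ℚ s⁆) →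
        (∀ s, (DB ∘ₗ DC - DC ∘ₗ DB) (FreeAlgebra.ι ℚ s)
            = ⁅DB (C s) - DC (B s) - ⁅B s, C s⁆, FreeAlgebra.ι ℚ s⁆) ∧
          ∑ s, ⁅DB (C s) - DC (B s) - ⁅B s, C s⁆, FreeAlgebra.ι ℚ s⁆ = 0 := by
  constructor
  · -- existence of the derivation
    let φ : FreeAlgebra ℚ S →ₐ[ℚ] TrivSqZeroExt (FreeAlgebra ℚ S) (FreeAlgebra ℚ S) :=
      FreeAlgebra.lift ℚ (fun s =>
        TrivSqZeroExt.inl (FreeAlgebra.ι ℚ s) + TrivSqZeroExt.inr ⁅B s, FreeAlgebra.ι ℚ s⁆)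
    have hfst : ∀ x : FreeAlgebra ℚ S, (φ x).fst = x := by
      intro x
      have : (TrivSqZeroExt.fstHom ℚ (FreeAlgebra ℚ S) (FreeAlgebra ℚ S)).comp φ
          = AlgHom.id ℚ (FreeAlgebra ℚ S) := by
        apply FreeAlgebra.hom_ext
        funext s
        simp [φ]
      exact DFunLike.congr_fun this x
    refine ⟨{ toFun := fun x => (φ x).snd,
              map_add' := by intro x y; simp,
              map_smul' := by intro q x; simp }, ?_, ?_⟩
    · intro x y
      simp only [LinearMap.coe_mk, AddHom.coe_mk, map_mul, TrivSqZeroExt.snd_mul,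
        hfst, smul_eq_mul, MulOpposite.smul_eq_mul_unop, MulOpposite.unop_op]
      abel
    · intro s
      simp only [LinearMap.coe_mk, AddHom.coe_mk, φ, FreeAlgebra.lift_ι_apply,
        TrivSqZeroExt.snd_add, TrivSqZeroExt.snd_inl, TrivSqZeroExt.snd_inr, zero_add]
  · intro DB DC hLB hLC hBs hCs
    have key : ∀ s, (DB ∘ₗ DC - DC ∘ₗ DB) (FreeAlgebra.ι ℚ s)
        = ⁅DB (C s) - DC (B s) - ⁅B s, C s⁆, FreeAlgebra.ι ℚ s⁆ := by
      intro s
      simp only [LinearMap.sub_apply, LinearMap.comp_apply, hBs s, hCs s, Ring.lie_def,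
        map_sub, hLB, hLC, hBs s, hCs s]
      noncomm_ring
    refine ⟨key, ?_⟩
    calc ∑ s, ⁅DB (C s) - DC (B s) - ⁅B s, C s⁆, FreeAlgebra.ι ℚ s⁆
        = ∑ s, (DB ∘ₗ DC - DC ∘ₗ DB) (FreeAlgebra.ι ℚ s) := by
          exact (Finset.sum_congr rfl fun s _ => (key s).symm)
      _ = DB (∑ s, DC (FreeAlgebra.ι ℚ s)) - DC (∑ s, DB (FreeAlgebra.ι ℚ s)) := by
          simp [Finset.sum_sub_distrib, map_sum]
      _ = 0 := by
          rw [Finset.sum_congr rfl fun s _ => hCs s, Finset.sum_congr rfl fun s _ => hBs s,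
            hC, hB, map_zero, map_zero, sub_zero]
end

section
/- Let A be the free associative algebra over ℚ on a finite set S, and let x ∈ A lie in the image of the cyclization map Cycl (the sum of cyclic permutations of a word). Then ∑_{s∈S} [∂_s x, s] = 0, where ∂_s deletes the initial letter s of each word starting with s (and kills other words). -/
/- STATEMENT 3: if x lies in the image of the cyclization map Cycl (sum of cyclic
   rotations of a word, extended linearly), then ∑_{s∈S} [∂_s x, s] = 0.
   The free associative ℚ-algebra on S is modelled as MonoidAlgebra ℚ (FreeMonoid S). -/

open scoped BigOperators

/-- The free associative ℚ-algebra on `S`. -/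
noncomputable abbrev FA (S : Type) := MonoidAlgebra ℚ (FreeMonoid S)

/-- The monomial corresponding to a word. -/
noncomputable def wordOf {S : Type} (w : List S) : FA S :=
  MonoidAlgebra.of ℚ (FreeMonoid S) (FreeMonoid.ofList w)

/-- Cyclization: the sum of all cyclic rotations of the word `w`. -/
noncomputable def cycl {S : Type} (w : List S) : FA S :=
  ∑ i ∈ Finset.range w.length, wordOf (w.rotate i)

/-- `∂_s` on a single word: delete the initial letter if it is `s`, otherwise `0`. -/
noncomputable def delWord {S : Type} [DecidableEq S] (s : S) : List S → FA S
  | [] => 0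
  | a :: t => if a = s then wordOf t else 0

/-- `∂_s`, extended ℚ-linearly to the free associative algebra. -/
noncomputable def partialD {S : Type} [DecidableEq S] (s : S) (x : FA S) : FA S :=
  Finsupp.sum x.coeff fun w c => c • delWord s (FreeMonoid.toList w)

lemma partialD_add {S : Type} [DecidableEq S] (s : S) (x y : FA S) :
    partialD s (x + y) = partialD s x + partialD s y := by
  unfold partialD; rw [MonoidAlgebra.coeff_add]; exact Finsupp.sum_add_index' (fun _ => by simp) (fun _ a b => add_smul a b _)

lemma partialD_smul {S : Type} [DecidableEq S] (s : S) (c : ℚ) (x : FA S) :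
    partialD s (c • x) = c • partialD s x := by
  unfold partialD
  rw [MonoidAlgebra.coeff_smul, Finsupp.sum_smul_index' (fun i => by simp), Finsupp.smul_sum]
  simp [smul_smul]

lemma wordOf_mul {S : Type} (u v : List S) :
    wordOf u * wordOf v = wordOf (u ++ v) := by
  unfold wordOf
  rw [← map_mul]
  rfl

lemma partialD_wordOf {S : Type} [DecidableEq S] (s : S) (u : List S) :
    partialD s (wordOf u) = delWord s u := by
  unfold partialD wordOf
  rw [MonoidAlgebra.of_apply, MonoidAlgebra.coeff_single, Finsupp.sum_single_index (by simp)]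
  simp [FreeMonoid.toList_ofList]

lemma partialD_zero {S : Type} [DecidableEq S] (s : S) : partialD s (0 : FA S) = 0 := by
  unfold partialD; rw [MonoidAlgebra.coeff_zero]; exact Finsupp.sum_zero_index

lemma partialD_sum {S : Type} [DecidableEq S] (s : S) {ι : Type*} (t : Finset ι)
    (f : ι → FA S) : partialD s (∑ i ∈ t, f i) = ∑ i ∈ t, partialD s (f i) := by
  classical
  induction t using Finset.induction with
  | empty => simp [partialD_zero]
  | insert _ _ h ih => simp [Finset.sum_insert h, partialD_add, ih]

lemma key (S : Type) [Fintype S] [DecidableEq S] (w : List S) :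
    ∑ s, ⁅partialD s (cycl w), wordOf [s]⁆ = 0 := by
  rcases eq_or_ne w [] with rfl | hw
  · simp [cycl, partialD_zero, Ring.lie_def]
  have hrot : ∀ i, ∑ s, ⁅partialD s (wordOf (w.rotate i)), wordOf [s]⁆
      = wordOf (w.rotate (i + 1)) - wordOf (w.rotate i) := by
    intro i
    rcases hcons : w.rotate i with _ | ⟨a, t⟩
    · exact absurd (by simpa using congrArg List.length hcons) (by simpa using hw)
    · have h1 : w.rotate (i + 1) = t ++ [a] := by
        rw [← List.rotate_rotate, hcons, List.rotate_cons_succ, List.rotate_zero]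
      rw [h1, ← hcons]
      rw [Finset.sum_eq_single a]
      · rw [hcons, partialD_wordOf]
        simp only [delWord, if_true, eq_self_iff_true]
        rw [Ring.lie_def, wordOf_mul, wordOf_mul]
        rfl
      · intro b _ hb
        rw [hcons, partialD_wordOf]
        simp [delWord, Ne.symm hb, Ring.lie_def]
      · intro h; exact absurd (Finset.mem_univ a) h
  calc ∑ s, ⁅partialD s (cycl w), wordOf [s]⁆
      = ∑ i ∈ Finset.range w.length, ∑ s,
          ⁅partialD s (wordOf (w.rotate i)), wordOf [s]⁆ := by
        rw [Finset.sum_comm]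
        exact Finset.sum_congr rfl fun s _ => by
          rw [cycl, partialD_sum]
          simp [Ring.lie_def, Finset.sum_mul, Finset.mul_sum, Finset.sum_sub_distrib]
    _ = ∑ i ∈ Finset.range w.length,
          (wordOf (w.rotate (i + 1)) - wordOf (w.rotate i)) :=
        Finset.sum_congr rfl fun i _ => hrot i
    _ = wordOf (w.rotate w.length) - wordOf (w.rotate 0) := Finset.sum_range_sub _ _
    _ = 0 := by rw [List.rotate_length, List.rotate_zero, sub_self]

theorem cycl_special (S : Type) [Fintype S] [DecidableEq S] (x : FA S)
    (hx : x ∈ Submodule.span ℚ (Set.range fun w : List S => cycl w)) :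
    ∑ s, ⁅partialD s x, wordOf [s]⁆ = 0 := by
  induction hx using Submodule.span_induction with
  | mem x h =>
    obtain ⟨w, rfl⟩ := h
    exact key S w
  | zero => simp [partialD, Ring.lie_def]
  | add x y _ _ hx hy =>
    simp only [partialD_add, Ring.lie_def, add_mul, mul_add, add_sub_add_comm, Finset.sum_add_distrib]
    simp only [Ring.lie_def] at hx hy
    rw [hx, hy, add_zero]
  | smul c x _ hx =>
    simp only [partialD_smul, Ring.lie_def, smul_mul_assoc, mul_smul_comm, ← smul_sub, ← Finset.smul_sum]
    simp only [Ring.lie_def] at hx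
    rw [hx, smul_zero]
end

section
/- The centralizer of a generator s in the free associative algebra A on a finite set S (with |S| ≥ 1) is the polynomial algebra ℚ[s]: an element x ∈ A commutes with s if and only if x is a polynomial in s. -/
open FreeMonoid

lemma aux_mul_single_one_eq {S : Type} (y : MonoidAlgebra ℚ (FreeMonoid S)) (g : FreeMonoid S) :
    (y * MonoidAlgebra.single g (1:ℚ)).coeff = Finsupp.mapDomain (· * g) y.coeff := by
  rw [MonoidAlgebra.mul_def, MonoidAlgebra.coeff_finsuppSum, Finsupp.mapDomain]
  refine Finsupp.sum_congr fun a _ => ?_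
  rw [MonoidAlgebra.coeff_single, Finsupp.sum_single_index] <;> simp

lemma aux_single_one_mul_eq {S : Type} (y : MonoidAlgebra ℚ (FreeMonoid S)) (g : FreeMonoid S) :
    (MonoidAlgebra.single g (1:ℚ) * y).coeff = Finsupp.mapDomain (g * ·) y.coeff := by
  rw [MonoidAlgebra.mul_def, MonoidAlgebra.coeff_single, Finsupp.sum_single_index]
  · simp only [one_mul, MonoidAlgebra.coeff_finsuppSum, MonoidAlgebra.coeff_single]; rfl
  · simp

section main

variable {S : Type} (s : S) (y : MonoidAlgebra ℚ (FreeMonoid S))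
  (H : Finsupp.mapDomain (· * FreeMonoid.of s) y.coeff = Finsupp.mapDomain (FreeMonoid.of s * ·) y.coeff)

include H

/-- every nonempty word in the support starts with `s` -/
lemma aux_head (t : S) (l : List S) (ht : t ≠ s) : y.coeff (ofList (t :: l)) = 0 := by
  have h1 : Finsupp.mapDomain (· * FreeMonoid.of s) y.coeff (ofList (t :: (l ++ [s])))
      = y.coeff (ofList (t :: l)) := by
    have : ofList (t :: (l ++ [s])) = ofList (t :: l) * FreeMonoid.of s := by
      rw [← ofList_singleton, ← ofList_append]; simp
    rw [this]
    exact Finsupp.mapDomain_apply (mul_left_injective _) y.coeff _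
  have h2 : Finsupp.mapDomain (FreeMonoid.of s * ·) y.coeff (ofList (t :: (l ++ [s]))) = 0 := by
    apply Finsupp.mapDomain_notin_range
    rintro ⟨a, ha⟩
    have : s :: toList a = t :: (l ++ [s]) := congrArg toList ha
    exact ht (List.head_eq_of_cons_eq this).symm
  rw [← h1, H, h2]

/-- rotation relation -/
lemma aux_rot (l : List S) : y.coeff (ofList (l ++ [s])) = y.coeff (ofList (s :: l)) := by
  have h1 : Finsupp.mapDomain (· * FreeMonoid.of s) y.coeff (ofList ((s :: l) ++ [s]))
      = y.coeff (ofList (s :: l)) := by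
    have : ofList ((s :: l) ++ [s]) = ofList (s :: l) * FreeMonoid.of s := by
      rw [← ofList_singleton, ← ofList_append]
    rw [this]
    exact Finsupp.mapDomain_apply (mul_left_injective _) y.coeff _
  have h2 : Finsupp.mapDomain (FreeMonoid.of s * ·) y.coeff (ofList ((s :: l) ++ [s]))
      = y.coeff (ofList (l ++ [s])) := by
    have : ofList ((s :: l) ++ [s]) = FreeMonoid.of s * ofList (l ++ [s]) := by
      rw [← ofList_cons]; rfl
    rw [this]
    exact Finsupp.mapDomain_apply (mul_right_injective _) y.coeff _
  rw [← h1, H, h2]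

/-- iterated rotation -/
lemma aux_rotn (n : ℕ) (l : List S) :
    y.coeff (ofList (l ++ List.replicate n s)) = y.coeff (ofList (List.replicate n s ++ l)) := by
  induction n generalizing l with
  | zero => simp
  | succ n ih =>
    have e1 : l ++ List.replicate (n+1) s = (l ++ List.replicate n s) ++ [s] := by
      rw [List.replicate_succ' (n := n) (a := s), List.append_assoc]
    have e2 : s :: (l ++ List.replicate n s) = (s :: l) ++ List.replicate n s := rfl
    have e3 : List.replicate n s ++ (s :: l) = List.replicate (n+1) s ++ l := by
      rw [List.replicate_succ' (n := n) (a := s), List.append_assoc]; rfl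
    rw [e1, aux_rot s y H, e2, ih, e3]

/-- every word in the support is a power of `s` -/
lemma aux_support (w : FreeMonoid S) (hw : y.coeff w ≠ 0) :
    w = ofList (List.replicate (toList w).length s) := by
  have key : ∀ l : List S, l = List.replicate l.length s ∨
      ∃ k t b, t ≠ s ∧ l = List.replicate k s ++ t :: b := by
    intro l
    induction l with
    | nil => left; rfl
    | cons c l ih =>
      by_cases hc : c = s
      · subst hc
        rcases ih with h | ⟨k, t, b, ht, hb⟩
        · left; rw [List.length_cons, List.replicate_succ]; exact congrArg _ h
        · right; exact ⟨k+1, t, b, ht, by rw [hb, List.replicate_succ]; rfl⟩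
      · right; exact ⟨0, c, l, hc, rfl⟩
  rcases key (toList w) with h | ⟨k, t, b, ht, hb⟩
  · conv_lhs => rw [← ofList_toList w]
    exact congrArg ofList h
  · exfalso
    apply hw
    have hw' : w = ofList (List.replicate k s ++ t :: b) := by
      conv_lhs => rw [← ofList_toList w]
      exact congrArg ofList hb
    rw [hw', ← aux_rotn s y H k (t :: b), List.cons_append]
    exact aux_head s y H t _ ht

omit H in
lemma aux_pow (n : ℕ) : (FreeMonoid.of s)^n = ofList (List.replicate n s) := by
  induction n with
  | zero => rfl
  | succ n ih => rw [pow_succ', ih, List.replicate_succ, ofList_cons]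

lemma aux_mem : y ∈ Algebra.adjoin ℚ {MonoidAlgebra.single (FreeMonoid.of s) (1:ℚ)} := by
  rw [← MonoidAlgebra.sum_coeff_single y]
  refine Subalgebra.sum_mem _ fun w hw => ?_
  rw [Finsupp.mem_support_iff] at hw
  obtain ⟨n, hn⟩ : ∃ n, w = (FreeMonoid.of s) ^ n :=
    ⟨_, by rw [aux_support s y H w hw, aux_pow]⟩
  rw [hn]
  have : MonoidAlgebra.single ((FreeMonoid.of s) ^ n) (y.coeff ((FreeMonoid.of s) ^ n))
      = (y.coeff ((FreeMonoid.of s) ^ n)) • (MonoidAlgebra.single (FreeMonoid.of s) (1:ℚ)) ^ n := by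
    rw [MonoidAlgebra.single_pow, one_pow, MonoidAlgebra.smul_single, smul_eq_mul, mul_one]
  rw [this]
  exact Subalgebra.smul_mem _ (Subalgebra.pow_mem _ (Algebra.self_mem_adjoin_singleton ℚ _) _) _

end main

theorem centralizer_of_generator (S : Type) [Fintype S] [Nonempty S] (s : S)
    (x : FreeAlgebra ℚ S) :
    x * FreeAlgebra.ι ℚ s = FreeAlgebra.ι ℚ s * x ↔
      x ∈ Algebra.adjoin ℚ {FreeAlgebra.ι ℚ s} := by
  set e := FreeAlgebra.equivMonoidAlgebraFreeMonoid (R := ℚ) (X := S) with he_def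
  have he : e (FreeAlgebra.ι ℚ s) = MonoidAlgebra.single (FreeMonoid.of s) (1:ℚ) := by
    simp [he_def, FreeAlgebra.equivMonoidAlgebraFreeMonoid, FreeAlgebra.lift_ι_apply,
      MonoidAlgebra.of_apply]
  constructor
  · intro h
    have H0 : e x * MonoidAlgebra.single (FreeMonoid.of s) (1:ℚ)
        = MonoidAlgebra.single (FreeMonoid.of s) (1:ℚ) * e x := by
      rw [← he, ← map_mul, ← map_mul, h]
    replace H0 := congrArg MonoidAlgebra.coeff H0
    rw [aux_mul_single_one_eq, aux_single_one_mul_eq] at H0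
    have hm := aux_mem s (e x) H0
    have hmap : Algebra.adjoin ℚ {MonoidAlgebra.single (FreeMonoid.of s) (1:ℚ)}
        = (Algebra.adjoin ℚ {FreeAlgebra.ι ℚ s}).map e.toAlgHom := by
      rw [AlgHom.map_adjoin, Set.image_singleton]
      exact congrArg _ (congrArg _ he.symm)
    rw [hmap, Subalgebra.mem_map] at hm
    obtain ⟨z, hz, hez⟩ := hm
    rwa [← e.injective hez]
  · intro hx
    have hc : Commute (FreeAlgebra.ι ℚ s) x := by
      induction hx using Algebra.adjoin_induction with
      | mem a ha => rw [Set.mem_singleton_iff] at ha; subst ha; exact Commute.refl _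
      | algebraMap r => exact (Algebra.commutes r _).symm
      | add a b _ _ ha hb => exact ha.add_right hb
      | mul a b _ _ ha hb => exact ha.mul_right hb
    exact hc.symm
end

section
/- In the free associative algebra on symbols X_g (g ∈ G) and Y, the shuffle product of the two words Y and (Y^{n_1−1} X_{g_2} Y^{n_2−1} ⋯ X_{g_m} Y^{n_m−1}) equals the sum over all positions of inserting Y into the second word; consequently, modulo shuffle relations of the form X_e·{Y ∘_Sh A}, any word X_e Y^{n_0−1} X_{g_1} ⋯ can be rewritten with n_0 = 1 via the identity X_e Y^{n_0−1} X_{g_1} Y^{n_1−1} ⋯ X_{g_m} Y^{n_m−1} ≡ (−1)^{n_0−1} X_e X_{g_1} { Y^{n_0−1} ∘_Sh (Y^{n_1−1} X_{g_2} ⋯ X_{g_m} Y^{n_m−1}) } modulo the span of elements X_e{Y ∘_Sh A}. -/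
/- STATEMENT 8: in the free associative algebra A(G) on Y (= `none`) and X_g (= `some g`):
   (i) the shuffle Y ∘_Sh w is the sum over all positions of inserting Y into w;
   (ii) modulo the span of elements X_e·{Y ∘_Sh A}, one has
        X_e Y^{n₀−1} X_{g₁} w ≡ (−1)^{n₀−1} X_e X_{g₁} (Y^{n₀−1} ∘_Sh w). -/

open scoped BigOperators

/-- The shuffle product of two words, as an element of the free associative algebra. -/
noncomputable def sh {S : Type} : List S → List S → FA S
  | [], w => wordOf w
  | a :: u, [] => wordOf (a :: u)
  | a :: u, b :: v => wordOf [a] * sh u (b :: v) + wordOf [b] * sh (a :: u) v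
  termination_by u v => u.length + v.length

lemma sh_nil_left {S : Type} (w : List S) : sh [] w = wordOf w := by rw [sh]

lemma sh_cons_nil {S : Type} (a : S) (u : List S) : sh (a :: u) [] = wordOf (a :: u) := by
  rw [sh]

lemma sh_cons_cons {S : Type} (a b : S) (u v : List S) :
    sh (a :: u) (b :: v) = wordOf [a] * sh u (b :: v) + wordOf [b] * sh (a :: u) v := by
  rw [sh]

lemma wordOf_append {S : Type} (u v : List S) :
    wordOf (u ++ v) = wordOf u * wordOf v := by
  unfold wordOf
  rw [← map_mul]
  rfl

lemma wordOf_cons {S : Type} (a : S) (v : List S) :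
    wordOf (a :: v) = wordOf [a] * wordOf v :=
  wordOf_append [a] v

lemma sh_nil_right {S : Type} (u : List S) : sh u [] = wordOf u := by
  cases u <;> simp [sh]

/-- Part (i), for any inserted letter. -/
lemma sh_single {S : Type} (a : S) (w : List S) :
    sh [a] w = ∑ i ∈ Finset.range (w.length + 1), wordOf (w.insertIdx i a) := by
  induction w with
  | nil => simp [sh]
  | cons b v ih =>
      rw [sh_cons_cons, sh_nil_left, ih,
        Finset.sum_range_succ' (fun i => wordOf ((b :: v).insertIdx i a)), Finset.mul_sum]
      simp only [List.insertIdx_succ_cons, List.insertIdx_zero, List.length_cons]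
      rw [add_comm]
      congr 1
      · exact Finset.sum_congr rfl fun i _ => (wordOf_cons b _).symm
      · exact (wordOf_cons a (b :: v)).symm

lemma sh_rep_single {S : Type} (y : S) (k : ℕ) :
    sh (List.replicate k y) [y] = ((k + 1 : ℚ)) • wordOf (List.replicate (k + 1) y) := by
  induction k with
  | zero => simp [sh]
  | succ k ih =>
      rw [List.replicate_succ, sh_cons_cons, ← List.replicate_succ, ih,
        show sh (List.replicate (k+1) y) [] = wordOf (List.replicate (k+1) y) from
          sh_nil_right _,
        mul_smul_comm, ← wordOf_cons, ← List.replicate_succ]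
      push_cast
      module

lemma sh_rep_succ_cons {S : Type} (y : S) (k : ℕ) (c : S) (u : List S) :
    sh (List.replicate (k+1) y) (c :: u)
      = wordOf [y] * sh (List.replicate k y) (c :: u)
        + wordOf [c] * sh (List.replicate (k+1) y) u := by
  rw [List.replicate_succ, sh_cons_cons, ← List.replicate_succ]

/-- Key combinatorial lemma: summing the shuffle of `y^k` with all single-`y` insertions
into `w` gives `(k+1)` times the shuffle of `y^(k+1)` with `w`. -/
lemma sh_rep_insert {S : Type} (y : S) :
    ∀ (w : List S) (k : ℕ),
      (∑ i ∈ Finset.range (w.length + 1), sh (List.replicate k y) (w.insertIdx i y))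
        = ((k + 1 : ℚ)) • sh (List.replicate (k + 1) y) w := by
  intro w
  induction w with
  | nil =>
      intro k
      simp only [List.length_nil, zero_add, Finset.sum_range_one, List.insertIdx_zero]
      rw [sh_rep_single, sh_nil_right]
  | cons b v ihv =>
      intro k
      induction k with
      | zero =>
          simp only [List.replicate_zero, List.replicate_one, sh_nil_left, Nat.cast_zero,
            zero_add, one_smul]
          rw [← sh_single y (b :: v)]
      | succ k ihk =>
          rw [Finset.sum_range_succ'
            (fun i => sh (List.replicate (k+1) y) ((b :: v).insertIdx i y))]
          simp only [List.insertIdx_succ_cons, List.insertIdx_zero, List.length_cons]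
          rw [Finset.sum_congr rfl (fun i _ => sh_rep_succ_cons y k b (v.insertIdx i y)),
            sh_rep_succ_cons y k y (b :: v), Finset.sum_add_distrib, ← Finset.mul_sum,
            ← Finset.mul_sum, ihv (k+1)]
          have h1 : (∑ i ∈ Finset.range (v.length + 1),
                sh (List.replicate k y) (b :: v.insertIdx i y))
              = ((k : ℚ) + 1) • sh (List.replicate (k+1) y) (b :: v)
                - sh (List.replicate k y) (y :: b :: v) := by
            rw [eq_sub_iff_add_eq, ← ihk, Finset.sum_range_succ'
              (fun i => sh (List.replicate k y) ((b :: v).insertIdx i y))]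
            simp only [List.insertIdx_succ_cons, List.insertIdx_zero, List.length_cons]
          rw [h1]
          conv_rhs => rw [show (k + 1 + 1 : ℕ) = (k+1) + 1 from rfl,
            sh_rep_succ_cons y (k+1) b v]
          simp only [mul_sub, mul_add, mul_smul_comm, smul_add, smul_sub, smul_smul]
          push_cast
          module

lemma insertIdx_replicate_append {S : Type} (y : S) (l : List S) :
    ∀ (k i : ℕ), i ≤ k →
      (List.replicate k y ++ l).insertIdx i y = List.replicate (k + 1) y ++ l := by
  intro k
  induction k with
  | zero => intro i hi; interval_cases i; simp
  | succ k ih =>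
      intro i hi
      cases i with
      | zero => simp [List.replicate_succ]
      | succ i =>
          rw [List.replicate_succ, List.cons_append, List.insertIdx_succ_cons,
            ih i (Nat.succ_le_succ_iff.mp hi), List.replicate_succ (a := y) (n := k+1), List.cons_append]

lemma insertIdx_length_append {S : Type} (a : S) (v : List S) :
    ∀ (u : List S) (j : ℕ),
      (u ++ v).insertIdx (u.length + j) a = u ++ v.insertIdx j a := by
  intro u
  induction u with
  | nil => intro j; simp
  | cons c u ih =>
      intro j
      rw [List.cons_append, List.length_cons,
        show u.length + 1 + j = (u.length + j) + 1 by ring,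
        List.insertIdx_succ_cons, ih, List.cons_append]

theorem shuffle_insert_and_rewrite (G : Type) [CommGroup G] [Fintype G] :
    (∀ w : List (Option G),
      sh [(none : Option G)] w =
        ∑ i ∈ Finset.range (w.length + 1), wordOf (w.insertIdx i none)) ∧
    (∀ (n₀ : ℕ), 1 ≤ n₀ → ∀ (g₁ : G) (w : List (Option G)),
      wordOf ((some (1 : G)) :: (List.replicate (n₀ - 1) none ++ some g₁ :: w)) -
          ((-1 : ℚ)) ^ (n₀ - 1) •
            (wordOf [some (1 : G)] * wordOf [some g₁] * sh (List.replicate (n₀ - 1) none) w) ∈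
        Submodule.span ℚ
          {x : FA (Option G) | ∃ A : List (Option G),
            x = wordOf [some (1 : G)] * sh [(none : Option G)] A}) := by
  set e : Option G := some (1 : G) with he
  set Sp : Submodule ℚ (FA (Option G)) := Submodule.span ℚ
      {x : FA (Option G) | ∃ A : List (Option G),
        x = wordOf [e] * sh [(none : Option G)] A} with hSp
  refine ⟨fun w => sh_single none w, ?_⟩
  have main : ∀ (k : ℕ) (g₁ : G) (w : List (Option G)),
      wordOf (e :: (List.replicate k none ++ some g₁ :: w)) -
        ((-1 : ℚ)) ^ k • (wordOf [e] * wordOf [some g₁] * sh (List.replicate k none) w)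
        ∈ Sp := by
    intro k
    induction k with
    | zero =>
        intro g₁ w
        simp only [List.replicate_zero, List.nil_append, pow_zero, one_smul]
        rw [show sh ([] : List (Option G)) w = wordOf w from by rw [sh],
          wordOf_cons, wordOf_cons (some g₁) w, mul_assoc, sub_self]
        exact Sp.zero_mem
    | succ k ih =>
        intro g₁ w
        set A : List (Option G) := List.replicate k none ++ some g₁ :: w with hA
        have hlenA : A.length = k + 1 + w.length := by simp [hA]; omega
        have hmemA : wordOf [e] * sh [(none : Option G)] A ∈ Sp :=
          Submodule.subset_span ⟨A, rfl⟩
        rw [sh_single none A] at hmemA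
        -- split the sum
        have hsplit : (∑ i ∈ Finset.range (A.length + 1), wordOf (A.insertIdx i none))
            = (k + 1 : ℚ) • wordOf (List.replicate (k+1) none ++ some g₁ :: w)
              + ∑ j ∈ Finset.range (w.length + 1),
                  wordOf (List.replicate k none ++ some g₁ :: w.insertIdx j none) := by
          have : A.length + 1 = (k + 1) + (w.length + 1) := by omega
          rw [this, Finset.sum_range_add]
          congr 1
          · rw [Finset.sum_congr rfl (fun i hi => by
              rw [hA, insertIdx_replicate_append none (some g₁ :: w) k i
                (by simpa using Nat.lt_succ_iff.mp (Finset.mem_range.mp hi))])]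
            rw [Finset.sum_const, Finset.card_range, ← Nat.cast_smul_eq_nsmul ℚ,
              Nat.cast_add, Nat.cast_one]
          · refine Finset.sum_congr rfl (fun j _ => ?_)
            have : A = (List.replicate k none ++ [some g₁]) ++ w := by simp [hA]
            rw [this, show k + 1 + j = (List.replicate k none ++ [some g₁]).length + j from by
              simp, insertIdx_length_append]
            simp
        rw [hsplit, mul_add, mul_smul_comm, Finset.mul_sum] at hmemA
        simp only [← wordOf_cons] at hmemA
        -- sum of inductive hypotheses
        have ihsum : (∑ j ∈ Finset.range (w.length + 1),
              (wordOf (e :: (List.replicate k none ++ some g₁ :: w.insertIdx j none)) -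
                ((-1 : ℚ)) ^ k • (wordOf [e] * wordOf [some g₁] *
                  sh (List.replicate k none) (w.insertIdx j none)))) ∈ Sp :=
          Submodule.sum_mem Sp (fun j _ => ih g₁ (w.insertIdx j none))
        rw [Finset.sum_sub_distrib, ← Finset.smul_sum, ← Finset.mul_sum,
          sh_rep_insert none w k] at ihsum
        have h3 : (k + 1 : ℚ) • wordOf (e :: (List.replicate (k+1) none ++ some g₁ :: w))
            + ((-1 : ℚ)) ^ k • (wordOf [e] * wordOf [some g₁] *
                ((k + 1 : ℚ) • sh (List.replicate (k+1) none) w)) ∈ Sp := by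
          have hsub := Sp.sub_mem hmemA ihsum
          convert hsub using 1
          abel
        rw [mul_smul_comm] at h3
        have hne : ((k : ℚ) + 1) ≠ 0 := by positivity
        suffices h : (k + 1 : ℚ) •
            (wordOf (e :: (List.replicate (k+1) none ++ some g₁ :: w)) -
              ((-1 : ℚ)) ^ (k+1) • (wordOf [e] * wordOf [some g₁] *
                sh (List.replicate (k+1) none) w)) ∈ Sp by
          have h5 := Sp.smul_mem (((k : ℚ) + 1)⁻¹) h
          rw [smul_smul, inv_mul_cancel₀ hne, one_smul] at h5
          exact h5
        convert h3 using 1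
        rw [pow_succ]
        module
  intro n₀ hn₀ g₁ w
  exact main (n₀ - 1) g₁ w
end

section
/- In the dihedral Lie coalgebra 𝒟_{••}(G) of a trivial group G = {e}, the inversion relation {e:…:e | −t_1 : ⋯ : −t_{m+1}} = {e:…:e | t_1 : ⋯ : t_{m+1}} forces the component 𝒟_{w,m} to vanish whenever w + m is odd. -/
/- STATEMENT 10: in the dihedral Lie coalgebra of the trivial group, the inversion
   relation forces 𝒟_{w,m} = 0 when w + m is odd.  The generators are encoded as
   I : (Fin m → ℕ) → M, where `I n` stands for I_{n₁+1,…,n_m+1}(e:⋯:e), so that the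
   weight is w = m + ∑ nᵢ and the inversion relation on the generating series
   {e:…:e|−t₁:⋯:−t_{m+1}} = {e:…:e|t₁:⋯:t_{m+1}} reads, coefficientwise,
   I n = (−1)^{∑ nᵢ} I n (= (−1)^{w−m} I n). -/

open scoped BigOperators

theorem dihedral_trivial_group_vanishing (m : ℕ) (hm : 1 ≤ m)
    (M : Type) [AddCommGroup M] [Module ℚ M]
    (I : (Fin m → ℕ) → M)
    (hinv : ∀ n : Fin m → ℕ, I n = ((-1 : ℚ)) ^ (∑ i, n i) • I n) :
    ∀ (n : Fin m → ℕ) (w : ℕ), w = m + ∑ i, n i → Odd (w + m) → I n = 0 := by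
  intro n w hw hodd
  subst hw
  have hs : Odd (∑ i, n i) := by
    have : m + ∑ i, n i + m = 2 * m + ∑ i, n i := by ring
    rw [this] at hodd
    obtain ⟨k, hk⟩ := hodd
    exact ⟨k - m, by omega⟩
  have h := hinv n
  rw [hs.neg_one_pow, neg_smul, one_smul] at h
  have h2 : (2 : ℚ) • I n = 0 := by
    rw [two_smul]
    linear_combination (norm := abel) h
  have := congrArg (fun x => (2⁻¹ : ℚ) • x) h2
  simpa [smul_smul] using this
end

section
/- With d_2(x) := x^8/((1−x^2)(1−x^6)), a_1(x) := x^3/(1−x^2), a_3(x) := x^{15}/((1−x^2)(1−x^4)(1−x^6)), the power series d_3(x) := d_2(x)·a_1(x) − a_3(x) equals x^{11}(1 + x^2 − x^4)/((1−x^2)(1−x^4)(1−x^6)), and its coefficient of x^w equals ⌊((w−3)^2 − 1)/48⌋ when w is odd and 0 when w is even. -/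
/- STATEMENT 13: with d₂ = x⁸/((1−x²)(1−x⁶)), a₁ = x³/(1−x²),
   a₃ = x¹⁵/((1−x²)(1−x⁴)(1−x⁶)), the series d₃ := d₂·a₁ − a₃ equals
   x¹¹(1+x²−x⁴)/((1−x²)(1−x⁴)(1−x⁶)), and its coefficient of x^w is
   ⌊((w−3)²−1)/48⌋ for odd w and 0 for even w (the integer part; ℕ-truncated
   subtraction/division agrees with it here since the coefficients are ≥ 0). -/

open PowerSeries

noncomputable def d2 : PowerSeries ℚ := X ^ 8 * ((1 - X ^ 2) * (1 - X ^ 6))⁻¹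
noncomputable def a1 : PowerSeries ℚ := X ^ 3 * (1 - X ^ 2)⁻¹
noncomputable def a3 : PowerSeries ℚ :=
  X ^ 15 * ((1 - X ^ 2) * (1 - X ^ 4) * (1 - X ^ 6))⁻¹

/-- Auxiliary: `fN t = ⌊(4t²−1)/48⌋` (ℕ-truncated). -/
def fN (t : ℕ) : ℕ := (4 * t^2 - 1) / 48

lemma fN_period (t : ℕ) (ht : 1 ≤ t) : fN (t+12) = fN t + (2*t+12) := by
  unfold fN
  have h1 : 1 ≤ t^2 := Nat.one_le_pow _ _ ht
  have h2 : (t+12)^2 = t^2 + 24*t + 144 := by ring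
  have h3 : 4*(t+12)^2 - 1 = (4*t^2 - 1) + (2*t+12)*48 := by omega
  rw [h3, Nat.add_mul_div_right _ _ (by norm_num : (0:ℕ) < 48)]

lemma fN_rec (t : ℕ) (ht : 1 ≤ t) :
    fN (t+6) + fN (t+2) + fN (t+1) = fN (t+5) + fN (t+4) + fN t := by
  induction t using Nat.strong_induction_on with
  | _ t ih =>
    by_cases h : t ≤ 12
    · interval_cases t <;> decide
    · obtain ⟨s, rfl⟩ : ∃ s, t = s + 12 := ⟨t - 12, by omega⟩
      have hs : 1 ≤ s := by omega
      have H := ih s (by omega) hs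
      have p1 := fN_period (s+6) (by omega)
      have p2 := fN_period (s+2) (by omega)
      have p3 := fN_period (s+1) (by omega)
      have p4 := fN_period (s+5) (by omega)
      have p5 := fN_period (s+4) (by omega)
      have p6 := fN_period s hs
      have e1 : s+12+6 = s+6+12 := by ring
      have e2 : s+12+2 = s+2+12 := by ring
      have e3 : s+12+1 = s+1+12 := by ring
      have e4 : s+12+5 = s+5+12 := by ring
      have e5 : s+12+4 = s+4+12 := by ring
      rw [e1, e2, e3, e4, e5, p1, p2, p3, p4, p5, p6]
      omega

/-- The claimed coefficient sequence. -/
noncomputable def cQ (w : ℕ) : ℚ := if Odd w then ((((w - 3) ^ 2 - 1) / 48 : ℕ) : ℚ) else 0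

lemma cQ_fN (w : ℕ) (hw : Odd w) (h3 : 3 ≤ w) : cQ w = (fN ((w-3)/2) : ℚ) := by
  unfold cQ fN
  rw [if_pos hw]
  congr 2
  obtain ⟨t, ht⟩ : ∃ t, w - 3 = 2 * t := ⟨(w-3)/2, by obtain ⟨k, hk⟩ := hw; omega⟩
  rw [ht]
  have : (2*t)/2 = t := by omega
  rw [this]
  ring

lemma hF : PowerSeries.mk cQ * ((1 - X^2) * (1 - X^4) * (1 - X^6)) =
    X^11 * (1 + X^2 - X^4 : PowerSeries ℚ) := by
  have expand : ((1 - X^2) * (1 - X^4) * (1 - X^6) : PowerSeries ℚ)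
      = 1 - X^2 - X^4 + X^8 + X^10 - X^12 := by ring
  have expand2 : (X^11 * (1 + X^2 - X^4) : PowerSeries ℚ) = X^11 + X^13 - X^15 := by ring
  rw [expand, expand2]
  ext n
  simp only [mul_sub, mul_add, mul_one, map_sub, map_add, coeff_mul_X_pow', coeff_mk,
    coeff_X_pow, coeff_one]
  by_cases hn : n < 17
  · interval_cases n <;> norm_num [cQ, Nat.odd_iff]
  · push_neg at hn
    rw [if_pos (by omega : 2 ≤ n), if_pos (by omega : 4 ≤ n), if_pos (by omega : 8 ≤ n),
      if_pos (by omega : 10 ≤ n), if_pos (by omega : 12 ≤ n),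
      if_neg (by omega : ¬ n = 11), if_neg (by omega : ¬ n = 13), if_neg (by omega : ¬ n = 15)]
    have hzero : ∀ m : ℕ, ¬ Odd m → cQ m = 0 := fun m hm => by simp [cQ, hm]
    rcases Nat.even_or_odd n with he | ho
    · have hne : ¬ Odd n := by simpa [Nat.not_odd_iff_even]
      rw [hzero n hne, hzero (n-2) (by rw [Nat.odd_iff] at hne ⊢; omega),
        hzero (n-4) (by rw [Nat.odd_iff] at hne ⊢; omega),
        hzero (n-8) (by rw [Nat.odd_iff] at hne ⊢; omega),
        hzero (n-10) (by rw [Nat.odd_iff] at hne ⊢; omega),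
        hzero (n-12) (by rw [Nat.odd_iff] at hne ⊢; omega)]
      ring
    · obtain ⟨s, hs⟩ : ∃ s, n = 2*s + 15 := by
        obtain ⟨k, hk⟩ := ho; exact ⟨k - 7, by omega⟩
      have hos : ∀ m : ℕ, m % 2 = 1 → Odd m := fun m hm => Nat.odd_iff.mpr hm
      rw [cQ_fN n ho (by omega), cQ_fN (n-2) (hos _ (by omega)) (by omega),
        cQ_fN (n-4) (hos _ (by omega)) (by omega), cQ_fN (n-8) (hos _ (by omega)) (by omega),
        cQ_fN (n-10) (hos _ (by omega)) (by omega), cQ_fN (n-12) (hos _ (by omega)) (by omega)]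
      rw [show (n-3)/2 = s+6 by omega, show (n-2-3)/2 = s+5 by omega,
        show (n-4-3)/2 = s+4 by omega, show (n-8-3)/2 = s+2 by omega,
        show (n-10-3)/2 = s+1 by omega, show (n-12-3)/2 = s by omega]
      have H := fN_rec s (by omega)
      have Hq : (fN (s+6) : ℚ) + fN (s+2) + fN (s+1) = fN (s+5) + fN (s+4) + fN s := by
        exact_mod_cast H
      linarith

lemma part1 : d2 * a1 - a3 =
    X ^ 11 * (1 + X ^ 2 - X ^ 4) * ((1 - X ^ 2) * (1 - X ^ 4) * (1 - X ^ 6)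
      : PowerSeries ℚ)⁻¹ := by
  set A : PowerSeries ℚ := 1 - X^2 with hA
  set B : PowerSeries ℚ := 1 - X^4 with hB
  set C : PowerSeries ℚ := 1 - X^6 with hC
  have cA : constantCoeff A ≠ 0 := by simp [hA]
  have cAC : constantCoeff (A * C) ≠ 0 := by simp [hA, hC]
  have cABC : constantCoeff (A * B * C) ≠ 0 := by simp [hA, hB, hC]
  have h1 : A * A⁻¹ = 1 := PowerSeries.mul_inv_cancel _ cA
  have h2 : (A * C) * (A * C)⁻¹ = 1 := PowerSeries.mul_inv_cancel _ cAC
  have h3 : (A * B * C) * (A * B * C)⁻¹ = 1 := PowerSeries.mul_inv_cancel _ cABC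
  have hM : (A * (A * C) * (A * B * C) : PowerSeries ℚ) ≠ 0 := by
    intro h
    have := congrArg (constantCoeff) h
    simp only [map_mul, map_zero, hA, hB, hC, map_sub, map_pow, map_one,
      constantCoeff_X] at this
    norm_num at this
  apply mul_right_cancel₀ hM
  unfold d2 a1 a3
  linear_combination (X^11 * (A*B*C) : PowerSeries ℚ) * h1
    + (X^11 * A⁻¹ * A * (A*B*C)) * h2
    - ((X^15 + X^11*(1+X^2-X^4)) * (A*(A*C))) * h3

lemma part1' : d2 * a1 - a3 = PowerSeries.mk cQ := by
  rw [part1]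
  have cABC : constantCoeff ((1 - X^2) * (1 - X^4) * (1 - X^6) : PowerSeries ℚ) ≠ 0 := by simp
  have h3 : ((1 - X^2) * (1 - X^4) * (1 - X^6) : PowerSeries ℚ)
      * ((1 - X^2) * (1 - X^4) * (1 - X^6))⁻¹ = 1 := PowerSeries.mul_inv_cancel _ cABC
  calc X ^ 11 * (1 + X ^ 2 - X ^ 4) * ((1 - X^2) * (1 - X^4) * (1 - X^6) : PowerSeries ℚ)⁻¹
      = (PowerSeries.mk cQ * ((1 - X^2) * (1 - X^4) * (1 - X^6)))
        * ((1 - X^2) * (1 - X^4) * (1 - X^6))⁻¹ := by rw [hF]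
    _ = PowerSeries.mk cQ * (((1 - X^2) * (1 - X^4) * (1 - X^6))
        * ((1 - X^2) * (1 - X^4) * (1 - X^6))⁻¹) := by ring
    _ = PowerSeries.mk cQ := by rw [h3, mul_one]

theorem depth_three_dimensions :
    d2 * a1 - a3 =
        X ^ 11 * (1 + X ^ 2 - X ^ 4) * ((1 - X ^ 2) * (1 - X ^ 4) * (1 - X ^ 6))⁻¹ ∧
      ∀ w : ℕ, PowerSeries.coeff w (d2 * a1 - a3) =
        if Odd w then ((((w - 3) ^ 2 - 1) / 48 : ℕ) : ℚ) else 0 := by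
  refine ⟨part1, fun w => ?_⟩
  rw [part1', coeff_mk]
  rfl
end

section
/- Let Γ₁(3;p)\SL₃±(F_p) be identified with the set of nonzero row vectors in F_p³ (p prime), with the parabolic P̃₁ (block upper-triangular with lower-right 1×1 block ±1) acting on the right. Let ρ: P̃₁ → Aut(W) be a representation trivial on the unipotent radical and on the ±1 factor, with W^{SL₂±(F_p)} = 0. Then the space of Γ̃₁(3;p)-invariant functions f: F_p³∖{0} → W satisfying f(X·y) = ρ(y⁻¹)f(X) for y ∈ P̃₁ is isomorphic to W^{Γ̃₁(2;p)}. -/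
/- STATEMENT 17 (Lemma KIR): identifying Γ̃₁(3;p)\SL₃±(F_p) with the nonzero row vectors
   of F_p³ (g ↦ last row of g), the space of functions f on F_p³∖{0} with values in W
   satisfying f(X·y) = ρ(y⁻¹) f(X) for y ∈ P̃₁ is isomorphic to W^{Γ̃₁(2;p)}; the
   isomorphism is evaluation at (0,1,0), stated as a bijection of the two sets. -/

open scoped Matrix

/-- Membership in the parabolic P̃₁ ⊂ SL₃±(F_p): determinant ±1 and last row (0,0,±1). -/
def inP1 (p : ℕ) (A : Matrix (Fin 3) (Fin 3) (ZMod p)) : Prop :=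
  (A.det = 1 ∨ A.det = -1) ∧ A 2 0 = 0 ∧ A 2 1 = 0 ∧ (A 2 2 = 1 ∨ A 2 2 = -1)

/-- Embedding of a 2×2 matrix as the upper-left block of a 3×3 matrix. -/
def embed2 (p : ℕ) (B : Matrix (Fin 2) (Fin 2) (ZMod p)) : Matrix (Fin 3) (Fin 3) (ZMod p) :=
  !![B 0 0, B 0 1, 0; B 1 0, B 1 1, 0; 0, 0, 1]

section Aux

variable (p : ℕ)

lemma vecMul_e1 (M : Matrix (Fin 3) (Fin 3) (ZMod p)) :
    Matrix.vecMul ![0,1,0] M = M 1 := by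
  funext j; simp [Matrix.vecMul, dotProduct, Fin.sum_univ_three]

lemma vecMul3 (X : Fin 3 → ZMod p) (A : Matrix (Fin 3) (Fin 3) (ZMod p)) (j : Fin 3) :
    Matrix.vecMul X A j = X 0 * A 0 j + X 1 * A 1 j + X 2 * A 2 j := by
  simp [Matrix.vecMul, dotProduct, Fin.sum_univ_three]

lemma inP1_isUnit_det {A : Matrix (Fin 3) (Fin 3) (ZMod p)} (hA : inP1 p A) :
    IsUnit A.det := by
  rcases hA.1 with h | h <;> rw [h]
  · exact isUnit_one
  · simpa using isUnit_one.neg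

lemma e1_ne_zero [Fact p.Prime] : (![0,1,0] : Fin 3 → ZMod p) ≠ 0 := by
  intro h
  have := congrFun h 1
  simp at this

lemma inP1_mul {A B : Matrix (Fin 3) (Fin 3) (ZMod p)} (hA : inP1 p A) (hB : inP1 p B) :
    inP1 p (A * B) := by
  obtain ⟨hdA, hA0, hA1, hA2⟩ := hA
  obtain ⟨hdB, hB0, hB1, hB2⟩ := hB
  have hmul : ∀ j, (A * B) 2 j = A 2 2 * B 2 j := by
    intro j
    rw [Matrix.mul_apply, Fin.sum_univ_three, hA0, hA1]
    ring
  refine ⟨?_, ?_, ?_, ?_⟩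
  · rw [Matrix.det_mul]
    rcases hdA with h | h <;> rcases hdB with h' | h' <;> rw [h, h'] <;> simp
  · rw [hmul, hB0, mul_zero]
  · rw [hmul, hB1, mul_zero]
  · rw [hmul]
    rcases hA2 with h | h <;> rcases hB2 with h' | h' <;> rw [h, h'] <;> simp

lemma inP1_inv [Fact p.Prime] {A : Matrix (Fin 3) (Fin 3) (ZMod p)} (hA : inP1 p A) :
    inP1 p A⁻¹ := by
  have hu := inP1_isUnit_det p hA
  obtain ⟨hdA, hA0, hA1, hA2⟩ := hA
  have key : ∀ j, A 2 2 * A⁻¹ 2 j = (1 : Matrix (Fin 3) (Fin 3) (ZMod p)) 2 j := by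
    intro j
    have h := Matrix.mul_nonsing_inv A hu
    have h2 := congrFun (congrFun h 2) j
    rw [Matrix.mul_apply, Fin.sum_univ_three, hA0, hA1] at h2
    rw [← h2]; ring
  have h22 : A 2 2 * A 2 2 = 1 := by rcases hA2 with h | h <;> rw [h] <;> ring
  refine ⟨?_, ?_, ?_, ?_⟩
  · rw [Matrix.det_nonsing_inv, Ring.inverse_eq_inv]
    rcases hdA with h | h <;> rw [h]
    · left; exact inv_one
    · right; exact inv_neg_one
  · have := key 0
    simp only [Matrix.one_apply_ne (by decide : (2 : Fin 3) ≠ 0)] at this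
    rcases hA2 with h | h <;> rw [h] at this <;> [simpa using this; simpa using neg_eq_zero.mp (by simpa using this)]
  · have := key 1
    simp only [Matrix.one_apply_ne (by decide : (2 : Fin 3) ≠ 1)] at this
    rcases hA2 with h | h <;> rw [h] at this <;> [simpa using this; simpa using neg_eq_zero.mp (by simpa using this)]
  · have := key 2
    simp only [Matrix.one_apply_eq] at this
    rcases hA2 with h | h <;> rw [h] at this
    · left; simpa using this
    · right; linear_combination -this

lemma inP1_U (a b : ZMod p) : inP1 p !![1, 0, a; 0, 1, b; 0, 0, 1] := by
  refine ⟨Or.inl ?_, ?_, ?_, Or.inl ?_⟩ <;>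
    simp [Matrix.det_fin_three, Matrix.vecHead, Matrix.vecTail]

lemma inP1_pm : inP1 p !![1, 0, 0; 0, 1, 0; 0, 0, -1] := by
  refine ⟨Or.inr ?_, ?_, ?_, Or.inr ?_⟩ <;>
    simp [Matrix.det_fin_three, Matrix.vecHead, Matrix.vecTail]

lemma embed2_mem {B : Matrix (Fin 2) (Fin 2) (ZMod p)} (hB : B.det = 1 ∨ B.det = -1) :
    inP1 p (embed2 p B) := by
  have hd : (embed2 p B).det = B.det := by
    simp [embed2, Matrix.det_fin_three, Matrix.det_fin_two, Matrix.vecHead, Matrix.vecTail]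
  refine ⟨?_, ?_, ?_, Or.inl ?_⟩
  · rw [hd]; exact hB
  all_goals simp [embed2, Matrix.vecHead, Matrix.vecTail]

/-- A matrix in P̃₁ whose middle row is the given vector `X` (for `(X 0, X 1) ≠ 0`). -/
def Mx (p : ℕ) (X : Fin 3 → ZMod p) : Matrix (Fin 3) (Fin 3) (ZMod p) :=
  if X 1 = 0 then !![0, (X 0)⁻¹, 0; X 0, X 1, X 2; 0, 0, 1]
  else !![(X 1)⁻¹, 0, 0; X 0, X 1, X 2; 0, 0, 1]

lemma Mx_row1 (X : Fin 3 → ZMod p) : Mx p X 1 = X := by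
  funext j
  unfold Mx
  split <;> fin_cases j <;> simp [Matrix.vecHead, Matrix.vecTail]

lemma Mx_mem [Fact p.Prime] (X : Fin 3 → ZMod p) (hX : ¬(X 0 = 0 ∧ X 1 = 0)) :
    inP1 p (Mx p X) := by
  unfold Mx
  split
  · rename_i h1
    have h0 : X 0 ≠ 0 := fun h => hX ⟨h, h1⟩
    refine ⟨Or.inr ?_, ?_, ?_, Or.inl ?_⟩ <;>
      simp [Matrix.det_fin_three, Matrix.vecHead, Matrix.vecTail, h1]
    rw [mul_comm, mul_inv_cancel₀ h0]
  · rename_i h1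
    refine ⟨Or.inl ?_, ?_, ?_, Or.inl ?_⟩ <;>
      simp [Matrix.det_fin_three, Matrix.vecHead, Matrix.vecTail]
    rw [inv_mul_cancel₀ h1]

lemma orbit_preserved [Fact p.Prime] (X : Fin 3 → ZMod p)
    {A : Matrix (Fin 3) (Fin 3) (ZMod p)} (hA : inP1 p A)
    (hX : ¬(X 0 = 0 ∧ X 1 = 0)) :
    ¬(Matrix.vecMul X A 0 = 0 ∧ Matrix.vecMul X A 1 = 0) := by
  rintro ⟨h0, h1⟩
  rw [vecMul3] at h0 h1
  obtain ⟨hdet, hA0, hA1, hA2⟩ := hA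
  have hd : A.det = A 2 2 * (A 0 0 * A 1 1 - A 0 1 * A 1 0) := by
    rw [Matrix.det_fin_three, hA0, hA1]; ring
  have hdne : A 0 0 * A 1 1 - A 0 1 * A 1 0 ≠ 0 := by
    intro h
    rw [h, mul_zero] at hd
    rcases hdet with h' | h' <;> rw [h'] at hd <;> simp at hd
  apply hX
  constructor
  · have key : X 0 * (A 0 0 * A 1 1 - A 0 1 * A 1 0) =
        (X 0 * A 0 0 + X 1 * A 1 0 + X 2 * A 2 0) * A 1 1 -
        (X 0 * A 0 1 + X 1 * A 1 1 + X 2 * A 2 1) * A 1 0 := by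
      rw [hA0, hA1]; ring
    rw [h0, h1] at key
    simp only [zero_mul, sub_zero] at key
    exact (mul_eq_zero.mp key).resolve_right hdne
  · have key : X 1 * (A 0 0 * A 1 1 - A 0 1 * A 1 0) =
        (X 0 * A 0 1 + X 1 * A 1 1 + X 2 * A 2 1) * A 0 0 -
        (X 0 * A 0 0 + X 1 * A 1 0 + X 2 * A 2 0) * A 0 1 := by
      rw [hA0, hA1]; ring
    rw [h0, h1] at key
    simp only [zero_mul, sub_zero] at key
    exact (mul_eq_zero.mp key).resolve_right hdne

lemma zero_orbit (X : Fin 3 → ZMod p)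
    {A : Matrix (Fin 3) (Fin 3) (ZMod p)} (hA : inP1 p A)
    (hX : X 0 = 0 ∧ X 1 = 0) :
    Matrix.vecMul X A 0 = 0 ∧ Matrix.vecMul X A 1 = 0 := by
  obtain ⟨hdet, hA0, hA1, hA2⟩ := hA
  constructor <;> rw [vecMul3, hX.1, hX.2] <;> [rw [hA0]; rw [hA1]] <;> ring

end Aux

theorem invariant_functions_iso (p : ℕ) [Fact p.Prime]
    (W : Type) [AddCommGroup W] [Module ℚ W]
    (ρ : Matrix (Fin 3) (Fin 3) (ZMod p) → (W →ₗ[ℚ] W))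
    (hρ1 : ρ 1 = LinearMap.id)
    (hρmul : ∀ A B, inP1 p A → inP1 p B → ρ (A * B) = ρ A ∘ₗ ρ B)
    -- ρ is trivial on the unipotent radical of P̃₁ …
    (hρU : ∀ a b : ZMod p, ρ !![1, 0, a; 0, 1, b; 0, 0, 1] = LinearMap.id)
    -- … and on the ±1 factor
    (hρpm : ρ !![1, 0, 0; 0, 1, 0; 0, 0, -1] = LinearMap.id)
    -- H⁰(SL₂±(F_p), W) = 0
    (hW0 : ∀ w : W,
      (∀ B : Matrix (Fin 2) (Fin 2) (ZMod p), B.det = 1 ∨ B.det = -1 →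
        ρ (embed2 p B) w = w) → w = 0) :
    Set.BijOn (fun f : (Fin 3 → ZMod p) → W => f ![0, 1, 0])
      {f | f 0 = 0 ∧ ∀ X : Fin 3 → ZMod p, X ≠ 0 →
        ∀ A, inP1 p A → f (Matrix.vecMul X A) = ρ (A⁻¹) (f X)}
      {w | ∀ B : Matrix (Fin 2) (Fin 2) (ZMod p), B.det = 1 ∨ B.det = -1 →
        B 1 0 = 0 → B 1 1 = 1 → ρ (embed2 p B) w = w} := by
  have hcomp : ∀ A B, inP1 p A → inP1 p B → ∀ v : W, ρ (A * B) v = ρ A (ρ B v) := by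
    intro A B hA hB v
    rw [hρmul A B hA hB]; rfl
  have hri : ∀ A, inP1 p A → ∀ v : W, ρ A (ρ A⁻¹ v) = v := by
    intro A hA v
    have h := hcomp A A⁻¹ hA (inP1_inv p hA) v
    rw [Matrix.mul_nonsing_inv A (inP1_isUnit_det p hA), hρ1] at h
    simpa using h.symm
  have hli : ∀ A, inP1 p A → ∀ v : W, ρ A⁻¹ (ρ A v) = v := by
    intro A hA v
    have h := hcomp A⁻¹ A (inP1_inv p hA) hA v
    rw [Matrix.nonsing_inv_mul A (inP1_isUnit_det p hA), hρ1] at h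
    simpa using h.symm
  -- the stabilizer lemma: ρ of a stabilizer element of ![0,1,0] fixes any invariant vector
  have stab : ∀ S : Matrix (Fin 3) (Fin 3) (ZMod p), inP1 p S →
      S 1 0 = 0 → S 1 1 = 1 → S 1 2 = 0 → ∀ w : W,
      (∀ B : Matrix (Fin 2) (Fin 2) (ZMod p), B.det = 1 ∨ B.det = -1 →
        B 1 0 = 0 → B 1 1 = 1 → ρ (embed2 p B) w = w) → ρ S w = w := by
    intro S hS h10 h11 h12 w hw
    obtain ⟨hdet, h20, h21, h22⟩ := hS
    have hdetS : S.det = S 0 0 * S 2 2 := by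
      rw [Matrix.det_fin_three, h10, h12, h20, h21, h11]; ring
    have h00 : S 0 0 = 1 ∨ S 0 0 = -1 := by
      rcases hdet with h | h <;> rcases h22 with h' | h' <;> rw [h, h'] at hdetS
      · left; linear_combination -hdetS
      · right; linear_combination hdetS
      · right; linear_combination -hdetS
      · left; linear_combination hdetS
    have h00sq : S 0 0 * S 0 0 = 1 := by rcases h00 with h | h <;> rw [h] <;> ring
    set B : Matrix (Fin 2) (Fin 2) (ZMod p) := !![S 0 0, S 0 1; 0, 1] with hBdef
    have hBd : B.det = S 0 0 := by simp [hBdef, Matrix.det_fin_two]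
    have hBdet : B.det = 1 ∨ B.det = -1 := by rw [hBd]; exact h00
    have hBw : ρ (embed2 p B) w = w := hw B hBdet (by simp [hBdef]) (by simp [hBdef])
    have hBmem : inP1 p (embed2 p B) := embed2_mem p hBdet
    rcases h22 with h' | h'
    · have hfact : embed2 p B * !![1, 0, S 0 0 * S 0 2; 0, 1, 0; 0, 0, 1] = S := by
        ext i j
        fin_cases i <;> fin_cases j <;>
          simp [embed2, hBdef, Matrix.mul_apply, Fin.sum_univ_three,
            Matrix.vecHead, Matrix.vecTail, h10, h11, h12, h20, h21, h']
        linear_combination S 0 2 * h00sq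
      rw [← hfact, hcomp _ _ hBmem (inP1_U p _ _), hρU]
      simpa using hBw
    · have hfact : (embed2 p B * !![1, 0, -(S 0 0 * S 0 2); 0, 1, 0; 0, 0, 1]) *
          !![1, 0, 0; 0, 1, 0; 0, 0, -1] = S := by
        ext i j
        fin_cases i <;> fin_cases j <;>
          simp [embed2, hBdef, Matrix.mul_apply, Fin.sum_univ_three,
            Matrix.vecHead, Matrix.vecTail, h10, h11, h12, h20, h21, h']
        linear_combination S 0 2 * h00sq
      rw [← hfact, hcomp _ _ (inP1_mul p hBmem (inP1_U p _ _)) (inP1_pm p), hρpm,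
        hcomp _ _ hBmem (inP1_U p _ _), hρU]
      simpa using hBw
  refine ⟨?_, ?_, ?_⟩
  · -- MapsTo
    rintro f ⟨hf0, hfe⟩ B hB hB10 hB11
    have hmem := embed2_mem p hB
    have hfix : Matrix.vecMul ![0,1,0] (embed2 p B) = ![0,1,0] := by
      rw [vecMul_e1]
      funext j
      fin_cases j <;> simp [embed2, hB10, hB11, Matrix.vecHead, Matrix.vecTail]
    have h := hfe ![0,1,0] (e1_ne_zero p) (embed2 p B) hmem
    rw [hfix] at h
    calc ρ (embed2 p B) (f ![0,1,0])
        = ρ (embed2 p B) (ρ (embed2 p B)⁻¹ (f ![0,1,0])) := by rw [← h]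
      _ = f ![0,1,0] := hri _ hmem _
  · -- InjOn
    rintro f ⟨hf0, hfe⟩ g ⟨hg0, hge⟩ heq
    simp only at heq
    funext X
    by_cases hX0 : X = 0
    · rw [hX0, hf0, hg0]
    by_cases hk : X 0 = 0 ∧ X 1 = 0
    · have key : ∀ f' : (Fin 3 → ZMod p) → W,
          (∀ Y : Fin 3 → ZMod p, Y ≠ 0 → ∀ A, inP1 p A →
            f' (Matrix.vecMul Y A) = ρ (A⁻¹) (f' Y)) → f' X = 0 := by
        intro f' hf'
        apply hW0
        intro B hB
        have hmem := embed2_mem p hB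
        have hfix : Matrix.vecMul X (embed2 p B) = X := by
          funext j
          rw [vecMul3]
          fin_cases j <;>
            simp [embed2, hk.1, hk.2, Matrix.vecHead, Matrix.vecTail]
        have h := hf' X hX0 (embed2 p B) hmem
        rw [hfix] at h
        calc ρ (embed2 p B) (f' X)
            = ρ (embed2 p B) (ρ (embed2 p B)⁻¹ (f' X)) := by rw [← h]
          _ = f' X := hri _ hmem _
      rw [key f hfe, key g hge]
    · have key : ∀ f' : (Fin 3 → ZMod p) → W,
          (∀ Y : Fin 3 → ZMod p, Y ≠ 0 → ∀ A, inP1 p A →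
            f' (Matrix.vecMul Y A) = ρ (A⁻¹) (f' Y)) →
          f' X = ρ (Mx p X)⁻¹ (f' ![0,1,0]) := by
        intro f' hf'
        have h := hf' ![0,1,0] (e1_ne_zero p) (Mx p X) (Mx_mem p X hk)
        rw [vecMul_e1, Mx_row1] at h
        exact h
      rw [key f hfe, key g hge, heq]
  · -- SurjOn
    intro w hw
    simp only [Set.mem_setOf_eq] at hw
    classical
    refine ⟨fun X => if X 0 = 0 ∧ X 1 = 0 then 0 else ρ (Mx p X)⁻¹ w, ⟨?_, ?_⟩, ?_⟩
    · simp
    · intro X hXne A hA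
      by_cases hk : X 0 = 0 ∧ X 1 = 0
      · have hk' := zero_orbit p X hA hk
        simp only [if_pos hk, if_pos hk', map_zero]
      · have hk' := orbit_preserved p X hA hk
        simp only [if_neg hk, if_neg hk']
        set Y := Matrix.vecMul X A with hYdef
        have hMX := Mx_mem p X hk
        have hMY := Mx_mem p Y hk'
        have hK : inP1 p (Mx p X * A) := inP1_mul p hMX hA
        have hS : inP1 p (Mx p X * A * (Mx p Y)⁻¹) := inP1_mul p hK (inP1_inv p hMY)
        set S := Mx p X * A * (Mx p Y)⁻¹ with hSdef
        have hSrow : S 1 = ![0,1,0] := by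
          have h1 : Matrix.vecMul ![0,1,0] S = ![0,1,0] := by
            rw [hSdef, ← Matrix.vecMul_vecMul, ← Matrix.vecMul_vecMul, vecMul_e1, Mx_row1]
            have hY : Matrix.vecMul X A = Matrix.vecMul ![0,1,0] (Mx p Y) := by
              rw [vecMul_e1, Mx_row1, hYdef]
            rw [hY, Matrix.vecMul_vecMul,
              Matrix.mul_nonsing_inv _ (inP1_isUnit_det p hMY), Matrix.vecMul_one]
          exact (vecMul_e1 p S).symm.trans h1
        have hstabw : ρ S w = w := by
          refine stab S hS ?_ ?_ ?_ w hw
          · have := congrFun hSrow 0; simpa using this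
          · have := congrFun hSrow 1; simpa using this
          · have := congrFun hSrow 2; simpa using this
        have hSw : ρ S⁻¹ w = w := by
          have h' := hli S hS w
          rw [hstabw] at h'
          exact h'
        have e1 : ρ A⁻¹ (ρ (Mx p X)⁻¹ w) = ρ ((Mx p X * A)⁻¹) w := by
          rw [Matrix.mul_inv_rev]
          exact (hcomp A⁻¹ (Mx p X)⁻¹ (inP1_inv p hA) (inP1_inv p hMX) w).symm
        have e2 : Mx p X * A = S * Mx p Y := by
          rw [hSdef, Matrix.mul_assoc, Matrix.nonsing_inv_mul _ (inP1_isUnit_det p hMY),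
            Matrix.mul_one]
        rw [e1, e2, Matrix.mul_inv_rev, hcomp (Mx p Y)⁻¹ S⁻¹ (inP1_inv p hMY) (inP1_inv p hS),
          hSw]
    · have hk : ¬((![0,1,0] : Fin 3 → ZMod p) 0 = 0 ∧ (![0,1,0] : Fin 3 → ZMod p) 1 = 0) := by
        simp
      simp only [if_neg hk]
      have hMx1 : Mx p ![0,1,0] = 1 := by
        unfold Mx
        rw [if_neg (by simp : ¬(![0,1,0] : Fin 3 → ZMod p) 1 = 0)]
        ext i j
        fin_cases i <;> fin_cases j <;>
          simp [Matrix.one_apply, Matrix.vecHead, Matrix.vecTail]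
      rw [hMx1, inv_one, hρ1]
      rfl
end
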